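/- arXiv:2002.00268 — 7 statements merged into one kernel-verified Lean document; each statement's English description precedes it below -/
import Mathlib

section
/- Let n ∈ ℕ and let I be a C^∞-radical ideal of C^∞(ℝ^n). Then for all f, g ∈ C^∞(ℝ^n): f + I ≺ g + I if and only if there exists φ ∈ I such that f(x) < g(x) for every x ∈ Z(φ). -/
noncomputable section

/-- The ring `C^∞(ℝ^n)` of infinitely differentiable functions `ℝ^n → ℝ`, as a subring of
the ring of all functions `ℝ^n → ℝ` with pointwise operations. -/
def CinfN (n : ℕ) : Subring ((Fin n → ℝ) → ℝ) where
  carrier := {f | ContDiff ℝ (⊤ : ℕ∞) f}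
  zero_mem' := show ContDiff ℝ (⊤ : ℕ∞) (fun _ => (0:ℝ)) from contDiff_const
  one_mem' := show ContDiff ℝ (⊤ : ℕ∞) (fun _ => (1:ℝ)) from contDiff_const
  add_mem' := fun {a b} (hf : ContDiff ℝ (⊤ : ℕ∞) a) (hg : ContDiff ℝ (⊤ : ℕ∞) b) => hf.add hg
  mul_mem' := fun {a b} (hf : ContDiff ℝ (⊤ : ℕ∞) a) (hg : ContDiff ℝ (⊤ : ℕ∞) b) => hf.mul hg
  neg_mem' := fun {a} (hf : ContDiff ℝ (⊤ : ℕ∞) a) => hf.neg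

/-- The zeroset of a smooth function on `ℝ^n`. -/
def ZN {n : ℕ} (f : CinfN n) : Set (Fin n → ℝ) := {x | (f : (Fin n → ℝ) → ℝ) x = 0}

/-- An ideal `I ⊆ C^∞(ℝ^n)` is `C^∞`-radical iff it contains every function whose zeroset
contains the zeroset of some member of `I`. -/
def IsCinfRadicalN {n : ℕ} (I : Ideal (CinfN n)) : Prop :=
  ∀ g : CinfN n, (∃ f ∈ I, ZN f ⊆ ZN g) → g ∈ I

end

/-
Both directions are pointwise arguments on a zeroset. If `u` is invertible modulo `I`, say
`u v - 1 ∈ I`, then on the zeroset of `(g - f - u²)² + (u v - 1)² ∈ I` we get `g - f = u² > 0`.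
Conversely, if `g - f > 0` on the closed set `Z(φ)`, a smooth Urysohn function glues `g - f` near
`Z(φ)` to `1` away from it into an everywhere positive smooth function; its square root `u` is a
unit of `C^∞(ℝ^n)`, and `g - f - u²` vanishes on `Z(φ)`, so lies in `I` by `C^∞`-radicality.
-/

section SmoothInterpolation

variable {E : Type*} [NormedAddCommGroup E] [NormedSpace ℝ E] [FiniteDimensional ℝ E] {k : ℕ∞}

-- `w = χ h + (1 - χ)` for a smooth Urysohn function `χ` equal to `1` on `Z` and `0` on `{h ≤ 0}`.
theorem exists_contDiff_pos_eqOn_of_pos_on {h : E → ℝ} {Z : Set E} (hh : ContDiff ℝ k h)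
    (hZ : IsClosed Z) (hpos : ∀ x ∈ Z, 0 < h x) :
    ∃ w : E → ℝ, ContDiff ℝ k w ∧ (∀ x, 0 < w x) ∧ Set.EqOn w h Z := by
  have hT : IsClosed {x | h x ≤ 0} := isClosed_le hh.continuous continuous_const
  have hd : Disjoint {x | h x ≤ 0} Z :=
    Set.disjoint_left.mpr fun x hx hxZ => (hpos x hxZ).not_ge hx
  obtain ⟨χ, hχ0, hχ1, hχmem⟩ :=
    exists_contMDiffMap_zero_one_of_isClosed (modelWithCornersSelf ℝ E) (n := k) hT hZ hd
  have hχ : ContDiff ℝ k χ := contMDiff_iff_contDiff.mp χ.contMDiff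
  refine ⟨fun x => χ x * h x + (1 - χ x), (hχ.mul hh).add (contDiff_const.sub hχ), ?_, ?_⟩
  · intro x
    obtain ⟨hχnonneg, hχle⟩ := hχmem x
    rcases le_or_gt (h x) 0 with hle | hlt
    · simp [hχ0 hle]
    · rcases eq_or_lt_of_le hχnonneg with hχx | hχpos
      · simp [← hχx]
      · nlinarith [mul_pos hχpos hlt]
  · intro x hx
    simp [hχ1 hx]

theorem exists_contDiff_ne_zero_sq_eqOn {h : E → ℝ} {Z : Set E} (hh : ContDiff ℝ k h)
    (hZ : IsClosed Z) (hpos : ∀ x ∈ Z, 0 < h x) :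
    ∃ u : E → ℝ, ContDiff ℝ k u ∧ (∀ x, u x ≠ 0) ∧ ∀ x ∈ Z, u x ^ 2 = h x := by
  obtain ⟨w, hw, hwpos, hwh⟩ := exists_contDiff_pos_eqOn_of_pos_on hh hZ hpos
  refine ⟨fun x => √(w x), hw.sqrt fun x => (hwpos x).ne', fun x => ?_, fun x hx => ?_⟩
  · exact (Real.sqrt_pos.mpr (hwpos x)).ne'
  · rw [Real.sq_sqrt (hwpos x).le, hwh hx]

end SmoothInterpolation

theorem Ideal.Quotient.exists_mul_sub_one_mem_of_isUnit_mk {R : Type*} [CommRing R] {I : Ideal R}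
    {u : R} (hu : IsUnit (Ideal.Quotient.mk I u)) : ∃ v, u * v - 1 ∈ I := by
  obtain ⟨b, hb⟩ := isUnit_iff_exists_inv.mp hu
  obtain ⟨v, rfl⟩ := Ideal.Quotient.mk_surjective b
  exact ⟨v, Ideal.Quotient.eq_zero_iff_mem.mp (by simp [hb])⟩

namespace CinfN

variable {n : ℕ}

theorem contDiff (p : CinfN n) : ContDiff ℝ (⊤ : ℕ∞) (p : (Fin n → ℝ) → ℝ) := p.2

theorem isClosed_ZN (p : CinfN n) : IsClosed (ZN p) :=
  isClosed_eq (contDiff p).continuous continuous_const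

theorem ZN_mul_self_add_mul_self (a c : CinfN n) : ZN (a * a + c * c) = ZN a ∩ ZN c := by
  ext x
  exact mul_self_add_mul_self_eq_zero

theorem isUnit_of_forall_ne_zero {u : CinfN n} (hu : ∀ x, (u : (Fin n → ℝ) → ℝ) x ≠ 0) :
    IsUnit u :=
  isUnit_iff_exists_inv.mpr ⟨⟨fun x => ((u : (Fin n → ℝ) → ℝ) x)⁻¹, (contDiff u).inv hu⟩,
    Subtype.ext (funext fun x => mul_inv_cancel₀ (hu x))⟩

end CinfN

/-- For a `C^∞`-radical ideal `I ⊆ C^∞(ℝ^n)` and `f, g ∈ C^∞(ℝ^n)`: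
`f + I ≺ g + I` (i.e. `(g − f) − u² ∈ I` for some `u` whose class mod `I` is invertible)
iff there is `φ ∈ I` with `f < g` pointwise on `Z(φ)`. -/
theorem statement2 (n : ℕ) (I : Ideal (CinfN n)) (hI : IsCinfRadicalN I) (f g : CinfN n) :
    (∃ u : CinfN n, IsUnit (Ideal.Quotient.mk I u) ∧ (g - f) - u ^ 2 ∈ I) ↔
      ∃ φ ∈ I, ∀ x ∈ ZN φ, (f : (Fin n → ℝ) → ℝ) x < (g : (Fin n → ℝ) → ℝ) x := by
  constructor
  · rintro ⟨u, hu, ha⟩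
    obtain ⟨v, hc⟩ := Ideal.Quotient.exists_mul_sub_one_mem_of_isUnit_mk hu
    set a := g - f - u ^ 2
    set c := u * v - 1
    refine ⟨a * a + c * c, I.add_mem (I.mul_mem_left a ha) (I.mul_mem_left c hc), fun x hx => ?_⟩
    rw [CinfN.ZN_mul_self_add_mul_self] at hx
    set F : CinfN n → ℝ := fun p => (p : (Fin n → ℝ) → ℝ) x
    obtain ⟨hax, hcx⟩ := hx
    change (F g - F f) - F u ^ 2 = 0 at hax
    change F u * F v - 1 = 0 at hcx
    have hux : F u ≠ 0 := left_ne_zero_of_mul_eq_one (sub_eq_zero.mp hcx)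
    linarith [sq_pos_of_ne_zero hux]
  · rintro ⟨φ, hφ, hfg⟩
    obtain ⟨u, hu, hu0, husq⟩ := exists_contDiff_ne_zero_sq_eqOn (CinfN.contDiff (g - f))
      (CinfN.isClosed_ZN φ) fun x hx => sub_pos.mpr (hfg x hx)
    refine ⟨⟨u, hu⟩, (CinfN.isUnit_of_forall_ne_zero hu0).map _, hI _ ⟨φ, hφ, fun x hx => ?_⟩⟩
    exact sub_eq_zero.mpr (husq x hx).symm
end

section
/- Let E be an arbitrary set and let I be a C^∞-radical ideal of C^∞(ℝ^E). Then for every f ∈ C^∞(ℝ^E): the class f + I is invertible in the quotient ring C^∞(ℝ^E)/I if and only if there exists φ ∈ I such that f(v) ≠ 0 for every v ∈ Z(φ). -/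
/-! If `f` has no zero on `Z(φ)`, then `g = f / (f² + φ²)` is smooth and `f g - 1` vanishes on
`Z(φ)`, so `f g - 1 ∈ I` by `C^∞`-radicality and `g + I` inverts `f + I`. Conversely, if
`f g - 1 ∈ I`, then `f` has no zero on `Z(f g - 1)`. -/

noncomputable section

open Set

/-- The continuous linear "restriction" map `ℝ^t → ℝ^s` for `s ⊆ t`. -/
def restrCLM {E : Type} (s t : Finset E) (h : s ⊆ t) : (↥t → ℝ) →L[ℝ] (↥s → ℝ) :=
  LinearMap.toContinuousLinearMap
    (LinearMap.funLeft ℝ ℝ (fun i : ↥s => (⟨i.1, h i.2⟩ : ↥t)))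

/-- A function `f : ℝ^E → ℝ` is (`C^∞`-)smooth iff it factors through the projection onto
finitely many coordinates via an infinitely differentiable function. -/
def IsCinf {E : Type} (f : (E → ℝ) → ℝ) : Prop :=
  ∃ (s : Finset E) (g : (↥s → ℝ) → ℝ),
    ContDiff ℝ (⊤ : ℕ∞) g ∧ ∀ v : E → ℝ, f v = g (fun i => v i.1)

theorem IsCinf.enlarge {E : Type} {f : (E → ℝ) → ℝ} {s : Finset E} {g : (↥s → ℝ) → ℝ}
    (hg : ContDiff ℝ (⊤ : ℕ∞) g) (hfg : ∀ v, f v = g (fun i => v i.1))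
    (t : Finset E) (hst : s ⊆ t) :
    ∃ g' : (↥t → ℝ) → ℝ, ContDiff ℝ (⊤ : ℕ∞) g' ∧ ∀ v, f v = g' (fun i => v i.1) := by
  refine ⟨g ∘ restrCLM s t hst, hg.comp (restrCLM s t hst).contDiff, fun v => ?_⟩
  have h1 : (restrCLM s t hst) (fun i : ↥t => v i.1) = fun i : ↥s => v i.1 := rfl
  simp only [Function.comp_apply, h1]
  exact hfg v

/-- The ring `C^∞(ℝ^E)` of smooth functions `ℝ^E → ℝ`, as a subring of the ring of all
functions `ℝ^E → ℝ` with pointwise operations. -/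
def Cinf (E : Type) : Subring ((E → ℝ) → ℝ) where
  carrier := {f | IsCinf f}
  zero_mem' := ⟨∅, fun _ => 0, contDiff_const, fun _ => rfl⟩
  one_mem' := ⟨∅, fun _ => 1, contDiff_const, fun _ => rfl⟩
  neg_mem' := by
    rintro f ⟨s, g, hg, hfg⟩
    exact ⟨s, -g, hg.neg, fun v => by simp [hfg v]⟩
  add_mem' := by
    rintro f₁ f₂ ⟨s, g₁, hg₁, hfg₁⟩ ⟨t, g₂, hg₂, hfg₂⟩
    haveI := Classical.decEq E
    obtain ⟨g₁', hg₁', hfg₁'⟩ := IsCinf.enlarge hg₁ hfg₁ (s ∪ t) Finset.subset_union_left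
    obtain ⟨g₂', hg₂', hfg₂'⟩ := IsCinf.enlarge hg₂ hfg₂ (s ∪ t) Finset.subset_union_right
    exact ⟨s ∪ t, g₁' + g₂', hg₁'.add hg₂', fun v => by
      simp only [Pi.add_apply, hfg₁' v, hfg₂' v]⟩
  mul_mem' := by
    rintro f₁ f₂ ⟨s, g₁, hg₁, hfg₁⟩ ⟨t, g₂, hg₂, hfg₂⟩
    haveI := Classical.decEq E
    obtain ⟨g₁', hg₁', hfg₁'⟩ := IsCinf.enlarge hg₁ hfg₁ (s ∪ t) Finset.subset_union_left
    obtain ⟨g₂', hg₂', hfg₂'⟩ := IsCinf.enlarge hg₂ hfg₂ (s ∪ t) Finset.subset_union_right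
    exact ⟨s ∪ t, g₁' * g₂', hg₁'.mul hg₂', fun v => by
      simp only [Pi.mul_apply, hfg₁' v, hfg₂' v]⟩

/-- The zeroset of a smooth function on `ℝ^E`. -/
def Z {E : Type} (f : Cinf E) : Set (E → ℝ) := {v | (f : (E → ℝ) → ℝ) v = 0}

/-- An ideal `I ⊆ C^∞(ℝ^E)` is `C^∞`-radical iff it contains every function whose zeroset
contains the zeroset of some member of `I`. -/
def IsCinfRadical {E : Type} (I : Ideal (Cinf E)) : Prop :=
  ∀ g : Cinf E, (∃ f ∈ I, Z f ⊆ Z g) → g ∈ I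

/-- The collection of zerosets of `ℝ^E`. -/
def zeroSets (E : Type) : Set (Set (E → ℝ)) := {X | ∃ f : Cinf E, X = Z f}

/-- A filter of zerosets of `ℝ^E`. -/
def IsZFilter {E : Type} (Φ : Set (Set (E → ℝ))) : Prop :=
  Φ ⊆ zeroSets E ∧ (Set.univ : Set (E → ℝ)) ∈ Φ ∧
    (∀ F ∈ Φ, ∀ G ∈ Φ, F ∩ G ∈ Φ) ∧
    (∀ F ∈ Φ, ∀ H ∈ zeroSets E, F ⊆ H → H ∈ Φ)

/-- `Ŝ`: the set of zerosets of members of a set `S ⊆ C^∞(ℝ^E)`. -/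
def hatSet {E : Type} (S : Set (Cinf E)) : Set (Set (E → ℝ)) := {X | ∃ f ∈ S, X = Z f}

/-- `Î`: the set of zerosets of members of the ideal `I`. -/
def hatI {E : Type} (I : Ideal (Cinf E)) : Set (Set (E → ℝ)) := hatSet (I : Set (Cinf E))

/-- `Φ̌`: the set of smooth functions whose zeroset belongs to `Φ`. -/
def checkSet {E : Type} (Φ : Set (Set (E → ℝ))) : Set (Cinf E) := {f : Cinf E | Z f ∈ Φ}

end


theorem IsCinf.div {E : Type} {f g : (E → ℝ) → ℝ} (hf : IsCinf f) (hg : IsCinf g)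
    (hg0 : ∀ v, g v ≠ 0) : IsCinf (fun v => f v / g v) := by
  classical
  obtain ⟨s, F, hF, hfF⟩ := hf
  obtain ⟨t, G, hG, hgG⟩ := hg
  obtain ⟨F', hF', hfF'⟩ := IsCinf.enlarge hF hfF (s ∪ t) Finset.subset_union_left
  obtain ⟨G', hG', hgG'⟩ := IsCinf.enlarge hG hgG (s ∪ t) Finset.subset_union_right
  -- every point of `ℝ^(s ∪ t)` is the restriction of a point of `ℝ^E`
  have hG'0 : ∀ w, G' w ≠ 0 := fun w => by
    have hw : (fun i : ↥(s ∪ t) => Function.extend Subtype.val w 0 i.1) = w :=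
      Function.extend_comp Subtype.val_injective w 0
    rw [← hw, ← hgG']
    exact hg0 _
  exact ⟨s ∪ t, fun w => F' w / G' w, hF'.div hG' hG'0, fun v => by
    simp only [hfF' v, hgG' v]⟩

theorem exists_mul_eq_one_on_Z {E : Type} (f φ : Cinf E)
    (hf : ∀ v ∈ Z φ, (f : (E → ℝ) → ℝ) v ≠ 0) :
    ∃ g : Cinf E, Z φ ⊆ Z (f * g - 1) := by
  obtain ⟨f, f_smooth⟩ := f
  obtain ⟨φ, φ_smooth⟩ := φ
  have hd0 : ∀ v, f v * f v + φ v * φ v ≠ 0 := fun v => by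
    by_cases hφv : φ v = 0
    · simpa [hφv] using hf v hφv
    · exact (add_pos_of_nonneg_of_pos (mul_self_nonneg _) (mul_self_pos.2 hφv)).ne'
  have d_smooth : f * f + φ * φ ∈ Cinf E :=
    add_mem (mul_mem f_smooth f_smooth) (mul_mem φ_smooth φ_smooth)
  refine ⟨⟨_, f_smooth.div d_smooth hd0⟩, fun v (hφv : φ v = 0) => ?_⟩
  change f v * (f v / (f v * f v + φ v * φ v)) - 1 = 0
  have hfv := hf v hφv
  rw [hφv]
  field_simp
  ring

theorem ne_zero_of_mem_Z_mul_sub_one {E : Type} {f g : Cinf E} {v : E → ℝ}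
    (hv : v ∈ Z (f * g - 1)) : (f : (E → ℝ) → ℝ) v ≠ 0 := fun hfv => by
  simp [Z, hfv] at hv

/-- For a `C^∞`-radical ideal `I ⊆ C^∞(ℝ^E)` and `f ∈ C^∞(ℝ^E)`:
`f + I` is invertible in `C^∞(ℝ^E)/I` iff there is `φ ∈ I` with `f` nonvanishing on `Z(φ)`. -/
theorem statement4 (E : Type) (I : Ideal (Cinf E)) (hI : IsCinfRadical I) (f : Cinf E) :
    IsUnit (Ideal.Quotient.mk I f) ↔
      ∃ φ ∈ I, ∀ v ∈ Z φ, (f : (E → ℝ) → ℝ) v ≠ 0 := by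
  constructor
  · intro hu
    obtain ⟨b, hb⟩ := hu.exists_right_inv
    obtain ⟨g, rfl⟩ := Ideal.Quotient.mk_surjective b
    have hfg : f * g - 1 ∈ I := Ideal.Quotient.eq.mp (by rwa [map_mul, map_one])
    exact ⟨f * g - 1, hfg, fun v hv => ne_zero_of_mem_Z_mul_sub_one hv⟩
  · rintro ⟨φ, hφI, hf⟩
    obtain ⟨g, hZ⟩ := exists_mul_eq_one_on_Z f φ hf
    have hfg : f * g - 1 ∈ I := hI _ ⟨φ, hφI, hZ⟩
    refine IsUnit.of_mul_eq_one (Ideal.Quotient.mk I g) ?_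
    rw [← map_mul, ← map_one (Ideal.Quotient.mk I)]
    exact Ideal.Quotient.eq.mpr hfg
end

section
/- Let E be an arbitrary set and let I be a C^∞-radical ideal of C^∞(ℝ^E). Then for all f, g ∈ C^∞(ℝ^E): f + I ≺ g + I if and only if there exists φ ∈ I such that f(v) < g(v) for every v ∈ Z(φ). -/
open Manifold in
theorem exists_contDiff_forall_pos_add_mul_sq {F : Type*} [NormedAddCommGroup F]
    [NormedSpace ℝ F] [FiniteDimensional ℝ F] {h φ : F → ℝ} (hh : Continuous h)
    (hφ : Continuous φ) (hpos : ∀ x, φ x = 0 → 0 < h x) :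
    ∃ c : F → ℝ, ContDiff ℝ (⊤ : ℕ∞) c ∧ ∀ x, 0 < h x + c x * φ x ^ 2 := by
  have hconvex : ∀ x, Convex ℝ {c : ℝ | 0 < h x + c * φ x ^ 2} := fun x =>
    Set.OrdConnected.convex ⟨fun c₁ hc₁ _ _ c hc => by
      have := mul_le_mul_of_nonneg_right hc.1 (sq_nonneg (φ x))
      simp only [Set.mem_ofPred_eq] at hc₁ ⊢
      linarith⟩
  have hpoint : ∀ x, ∃ c : ℝ, 0 < h x + c * φ x ^ 2 := fun x => by
    by_cases hx : φ x = 0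
    · exact ⟨0, by simpa using hpos x hx⟩
    · exact ⟨(1 - h x) / φ x ^ 2, by rw [div_mul_cancel₀ _ (by positivity)]; linarith⟩
  obtain ⟨c, hc⟩ := exists_contMDiffMap_forall_mem_convex_of_local_const 𝓘(ℝ, F)
    (n := (⊤ : ℕ∞)) hconvex fun x => by
      obtain ⟨c, hc⟩ := hpoint x
      exact ⟨c, (hh.add (continuous_const.mul (hφ.pow 2))).continuousAt.eventually
        (eventually_gt_nhds hc)⟩
  exact ⟨c, contMDiff_iff_contDiff.mp c.contMDiff, hc⟩

namespace Cinf

variable {E : Type}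

instance : CoeFun (Cinf E) (fun _ => (E → ℝ) → ℝ) := ⟨Subtype.val⟩

theorem restrict_surjective (s : Finset E) :
    Function.Surjective fun (v : E → ℝ) (i : ↥s) => v i.1 :=
  Subtype.val_injective.surjective_comp_right

def ofContDiff (s : Finset E) (g : (↥s → ℝ) → ℝ) (hg : ContDiff ℝ (⊤ : ℕ∞) g) : Cinf E :=
  ⟨fun v => g fun i => v i.1, s, g, hg, fun _ => rfl⟩

@[simp]
theorem ofContDiff_apply (s : Finset E) (g : (↥s → ℝ) → ℝ) (hg : ContDiff ℝ (⊤ : ℕ∞) g)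
    (v : E → ℝ) : ofContDiff s g hg v = g fun i => v i.1 :=
  rfl

@[ext]
theorem ext {a b : Cinf E} (h : ∀ v, a v = b v) : a = b :=
  Subtype.ext (funext h)

@[simp] theorem add_apply (a b : Cinf E) (v : E → ℝ) : (a + b) v = a v + b v := rfl
@[simp] theorem sub_apply (a b : Cinf E) (v : E → ℝ) : (a - b) v = a v - b v := rfl
@[simp] theorem mul_apply (a b : Cinf E) (v : E → ℝ) : (a * b) v = a v * b v := rfl
@[simp] theorem one_apply (v : E → ℝ) : (1 : Cinf E) v = 1 := rfl
@[simp] theorem pow_apply (a : Cinf E) (n : ℕ) (v : E → ℝ) : (a ^ n) v = a v ^ n := by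
  induction n with
  | zero => rfl
  | succ n ih => rw [pow_succ, mul_apply, ih, pow_succ]

theorem mem_Z {a : Cinf E} {v : E → ℝ} : v ∈ Z a ↔ a v = 0 := Iff.rfl

theorem Z_sq_add_sq (a b : Cinf E) : Z (a ^ 2 + b ^ 2) = Z a ∩ Z b := by
  ext v
  simp only [Set.mem_inter_iff, mem_Z, add_apply, pow_apply]
  rw [add_eq_zero_iff_of_nonneg (sq_nonneg _) (sq_nonneg _), sq_eq_zero_iff, sq_eq_zero_iff]

theorem exists_common_finset (a b : Cinf E) :
    ∃ (t : Finset E) (a' b' : (↥t → ℝ) → ℝ), ContDiff ℝ (⊤ : ℕ∞) a' ∧ ContDiff ℝ (⊤ : ℕ∞) b' ∧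
      ∀ v, a v = a' (fun i => v i.1) ∧ b v = b' (fun i => v i.1) := by
  classical
  obtain ⟨s, a₀, ha₀, ha⟩ := a.2
  obtain ⟨t, b₀, hb₀, hb⟩ := b.2
  obtain ⟨a', ha', ha'eq⟩ := IsCinf.enlarge ha₀ ha (s ∪ t) Finset.subset_union_left
  obtain ⟨b', hb', hb'eq⟩ := IsCinf.enlarge hb₀ hb (s ∪ t) Finset.subset_union_right
  exact ⟨s ∪ t, a', b', ha', hb', fun v => ⟨ha'eq v, hb'eq v⟩⟩

theorem exists_forall_pos_add_mul_sq (a b : Cinf E) (hpos : ∀ v, b v = 0 → 0 < a v) :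
    ∃ c : Cinf E, ∀ v, 0 < a v + c v * b v ^ 2 := by
  obtain ⟨t, a', b', ha', hb', hab⟩ := exists_common_finset a b
  have hpos' : ∀ x, b' x = 0 → 0 < a' x := by
    intro x hx
    obtain ⟨v, rfl⟩ := restrict_surjective t x
    rw [← (hab v).1]
    exact hpos v (by rw [(hab v).2, hx])
  obtain ⟨c, hc, hc_pos⟩ :=
    exists_contDiff_forall_pos_add_mul_sq ha'.continuous hb'.continuous hpos'
  exact ⟨ofContDiff t c hc, fun v => by simpa [(hab v).1, (hab v).2] using hc_pos _⟩

theorem exists_isUnit_sq_eq (a : Cinf E) (ha : ∀ v, 0 < a v) :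
    ∃ u : Cinf E, IsUnit u ∧ u ^ 2 = a := by
  obtain ⟨s, g, hg, hag⟩ := a.2
  have hg_pos : ∀ x, 0 < g x := by
    intro x
    obtain ⟨v, rfl⟩ := restrict_surjective s x
    rw [← hag v]
    exact ha v
  have hsqrt : ContDiff ℝ (⊤ : ℕ∞) fun x => √(g x) := hg.sqrt fun x => (hg_pos x).ne'
  have hsqrt_pos : ∀ x, 0 < √(g x) := fun x => Real.sqrt_pos.mpr (hg_pos x)
  let u := ofContDiff s _ hsqrt
  let w := ofContDiff s _ (hsqrt.inv fun x => (hsqrt_pos x).ne')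
  have huw : u * w = 1 := by
    ext v
    exact mul_inv_cancel₀ (hsqrt_pos _).ne'
  refine ⟨u, .of_mul_eq_one w huw, ?_⟩
  ext v
  simp only [pow_apply, u, ofContDiff_apply]
  rw [Real.sq_sqrt (hg_pos _).le, ← hag v]

theorem exists_mem_forall_mem_Z_pos {I : Ideal (Cinf E)} {a u : Cinf E}
    (hu : IsUnit (Ideal.Quotient.mk I u)) (ha : a - u ^ 2 ∈ I) :
    ∃ φ ∈ I, ∀ v ∈ Z φ, 0 < a v := by
  obtain ⟨w, hw⟩ := Ideal.Quotient.mk_surjective (I := I) ↑hu.unit⁻¹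
  have huw : u * w - 1 ∈ I :=
    Ideal.Quotient.eq.mp (by rw [map_mul, hw, map_one, IsUnit.mul_val_inv])
  refine ⟨(a - u ^ 2) ^ 2 + (u * w - 1) ^ 2,
    add_mem (I.pow_mem_of_mem ha 2 two_pos) (I.pow_mem_of_mem huw 2 two_pos), ?_⟩
  rw [Z_sq_add_sq]
  rintro v ⟨hav, huwv⟩
  simp only [mem_Z, sub_apply, mul_apply, pow_apply, one_apply, sub_eq_zero] at hav huwv
  have hu_ne : u v ≠ 0 := left_ne_zero_of_mul_eq_one huwv
  rw [hav]
  positivity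

theorem exists_isUnit_sub_sq_mem {I : Ideal (Cinf E)} {a φ : Cinf E} (hφ : φ ∈ I)
    (ha : ∀ v ∈ Z φ, 0 < a v) : ∃ u : Cinf E, IsUnit u ∧ a - u ^ 2 ∈ I := by
  obtain ⟨c, hc⟩ := exists_forall_pos_add_mul_sq a φ ha
  obtain ⟨u, hu, hsq⟩ := exists_isUnit_sq_eq (a + c * φ ^ 2) (by simpa using hc)
  refine ⟨u, hu, ?_⟩
  have hdiff : a - u ^ 2 = -(c * φ) * φ := by rw [hsq]; ring
  rw [hdiff]
  exact I.mul_mem_left _ hφ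

end Cinf

theorem statement5_general (E : Type) (I : Ideal (Cinf E)) (f g : Cinf E) :
    (∃ u : Cinf E, IsUnit (Ideal.Quotient.mk I u) ∧ (g - f) - u ^ 2 ∈ I) ↔
      ∃ φ ∈ I, ∀ v ∈ Z φ, (f : (E → ℝ) → ℝ) v < (g : (E → ℝ) → ℝ) v := by
  constructor
  · rintro ⟨u, hu, hmem⟩
    obtain ⟨φ, hφ, hpos⟩ := Cinf.exists_mem_forall_mem_Z_pos hu hmem
    exact ⟨φ, hφ, fun v hv => sub_pos.mp (hpos v hv)⟩
  · rintro ⟨φ, hφ, hlt⟩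
    obtain ⟨u, hu, hmem⟩ :=
      Cinf.exists_isUnit_sub_sq_mem (a := g - f) hφ fun v hv => sub_pos.mpr (hlt v hv)
    exact ⟨u, hu.map _, hmem⟩

/-- For a `C^∞`-radical ideal `I ⊆ C^∞(ℝ^E)` and `f, g ∈ C^∞(ℝ^E)`:
`f + I ≺ g + I` (i.e. `(g − f) − u² ∈ I` for some `u` whose class mod `I` is invertible)
iff there is `φ ∈ I` with `f < g` pointwise on `Z(φ)`. -/
theorem statement5 (E : Type) (I : Ideal (Cinf E)) (hI : IsCinfRadical I) (f g : Cinf E) :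
    (∃ u : Cinf E, IsUnit (Ideal.Quotient.mk I u) ∧ (g - f) - u ^ 2 ∈ I) ↔
      ∃ φ ∈ I, ∀ v ∈ Z φ, (f : (E → ℝ) → ℝ) v < (g : (E → ℝ) → ℝ) v :=
  statement5_general E I f g
end

section
/- Let E be an arbitrary set. (1) For every filter of zerosets Φ of ℝ^E, one has (Φ̌)^ = Φ, i.e. {Z(f) : f ∈ C^∞(ℝ^E), Z(f) ∈ Φ} = Φ. (2) For every ideal I of C^∞(ℝ^E), one has (Î)ˇ = {g ∈ C^∞(ℝ^E) : there exists f ∈ I with Z(g) = Z(f)}, and this set equals {g ∈ C^∞(ℝ^E) : there exists f ∈ I with Z(f) ⊆ Z(g)} (the C^∞-radical of I). -/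
/-! If `f ∈ I` and `Z f ⊆ Z g`, then `f * g ∈ I` and `Z (f * g) = Z f ∪ Z g = Z g`. -/

section ZeroSets

variable {E : Type}

theorem Z_mul (f g : Cinf E) : Z (f * g) = Z f ∪ Z g := by
  ext v
  exact mul_eq_zero

theorem hatSet_checkSet_of_subset_zeroSets {Φ : Set (Set (E → ℝ))} (hΦ : Φ ⊆ zeroSets E) :
    hatSet (checkSet Φ) = Φ := by
  ext X
  constructor
  · rintro ⟨f, hf, rfl⟩
    exact hf
  · intro hX
    obtain ⟨f, rfl⟩ := hΦ hX
    exact ⟨f, hX, rfl⟩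

theorem checkSet_hatI (I : Ideal (Cinf E)) :
    checkSet (hatI I) = {g : Cinf E | ∃ f ∈ I, Z g = Z f} :=
  rfl

theorem exists_Z_eq_iff_exists_Z_subset (I : Ideal (Cinf E)) (g : Cinf E) :
    (∃ f ∈ I, Z g = Z f) ↔ ∃ f ∈ I, Z f ⊆ Z g := by
  constructor
  · rintro ⟨f, hf, hgf⟩
    exact ⟨f, hf, hgf.ge⟩
  · rintro ⟨f, hf, hfg⟩
    exact ⟨f * g, I.mul_mem_right g hf, by
      rw [Z_mul]
      exact (Set.union_eq_self_of_subset_left hfg).symm⟩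

end ZeroSets

/-- (1) For every filter of zerosets `Φ`, `(Φ̌)^ = Φ`.
(2) For every ideal `I ⊆ C^∞(ℝ^E)`,
`(Î)ˇ = {g : ∃ f ∈ I, Z(g) = Z(f)} = {g : ∃ f ∈ I, Z(f) ⊆ Z(g)}` (the `C^∞`-radical of `I`). -/
theorem statement9 (E : Type) :
    (∀ Φ : Set (Set (E → ℝ)), IsZFilter Φ → hatSet (checkSet Φ) = Φ) ∧
    (∀ I : Ideal (Cinf E),
      checkSet (hatI I) = {g : Cinf E | ∃ f ∈ I, Z g = Z f} ∧
      checkSet (hatI I) = {g : Cinf E | ∃ f ∈ I, Z f ⊆ Z g}) :=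
  ⟨fun _ hΦ => hatSet_checkSet_of_subset_zeroSets hΦ.1,
    fun I => ⟨checkSet_hatI I, (checkSet_hatI I).trans
      (Set.ext fun g => exists_Z_eq_iff_exists_Z_subset I g)⟩⟩
end

section
/- Let E be an arbitrary set and let I be a proper C^∞-radical ideal of C^∞(ℝ^E). Then the canonical relation ≺ on the quotient ring C^∞(ℝ^E)/I is asymmetric: for all f, g ∈ C^∞(ℝ^E), it is not the case that both f + I ≺ g + I and g + I ≺ f + I hold. -/
namespace Ideal

variable {R : Type*} [CommRing R] (I : Ideal R)

/-- The relation `f + I ≺ g + I` on `R ⧸ I`. -/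
def Prec (f g : R) : Prop :=
  ∃ u : R, IsUnit (Ideal.Quotient.mk I u) ∧ (g - f) - u ^ 2 ∈ I

theorem not_prec_and_prec (hI : I ≠ ⊤) (hsq : ∀ u v : R, u ^ 2 + v ^ 2 ∈ I → u ∈ I)
    (f g : R) : ¬ (I.Prec f g ∧ I.Prec g f) := by
  rintro ⟨⟨u, hu, hgf⟩, ⟨v, -, hfg⟩⟩
  have hsum : u ^ 2 + v ^ 2 ∈ I := by
    rw [← I.neg_mem_iff]
    convert I.add_mem hgf hfg using 1
    ring
  have : Nontrivial (R ⧸ I) := Ideal.Quotient.nontrivial_iff.2 hI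
  rw [Ideal.Quotient.eq_zero_iff_mem.2 (hsq u v hsum)] at hu
  exact not_isUnit_zero hu

end Ideal

theorem Z_sq_add_sq_subset {E : Type} (u v : Cinf E) : Z (u ^ 2 + v ^ 2) ⊆ Z u := by
  intro x hx
  simp only [Z, Set.mem_ofPred_eq, Subring.coe_add, Subring.coe_pow, Pi.add_apply,
    Pi.pow_apply] at hx ⊢
  nlinarith [sq_nonneg ((u : (E → ℝ) → ℝ) x), sq_nonneg ((v : (E → ℝ) → ℝ) x)]

theorem IsCinfRadical.mem_of_sq_add_sq_mem {E : Type} {I : Ideal (Cinf E)}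
    (hI : IsCinfRadical I) {u v : Cinf E} (h : u ^ 2 + v ^ 2 ∈ I) : u ∈ I :=
  hI u ⟨_, h, Z_sq_add_sq_subset u v⟩

/-- For a proper `C^∞`-radical ideal `I ⊆ C^∞(ℝ^E)`, the canonical
relation `≺` on `C^∞(ℝ^E)/I` is asymmetric. -/
theorem statement15 (E : Type) (I : Ideal (Cinf E)) (hI : IsCinfRadical I)
    (hproper : (1 : Cinf E) ∉ I) (f g : Cinf E) :
    ¬ ((∃ u : Cinf E, IsUnit (Ideal.Quotient.mk I u) ∧ (g - f) - u ^ 2 ∈ I) ∧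
       (∃ u : Cinf E, IsUnit (Ideal.Quotient.mk I u) ∧ (f - g) - u ^ 2 ∈ I)) :=
  I.not_prec_and_prec ((I.ne_top_iff_one).2 hproper) (fun _ _ => hI.mem_of_sq_add_sq_mem) f g
end

section
/- Let E be an arbitrary set. For every invertible element f of the ring C^∞(ℝ^E), there exists an invertible element u of C^∞(ℝ^E) such that f = u² or f = −u². In other words, the group of units of C^∞(ℝ^E) equals the union of the set of squares of units and the set of negatives of squares of units. -/
/-!
A unit `f` of `C^∞(ℝ^E)` vanishes nowhere, and since `ℝ^E` is connected, the intermediate value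
theorem forces `f` or `-f` to be everywhere positive. The square root of a positive smooth
function is smooth, so `f` or `-f` is the square of some `u`, which is a unit because `u ^ 2` is.
-/

theorem pos_or_neg_of_continuous_of_ne_zero {X : Type*} [TopologicalSpace X] [PreconnectedSpace X]
    {f : X → ℝ} (hf : Continuous f) (h0 : ∀ x, f x ≠ 0) :
    (∀ x, 0 < f x) ∨ (∀ x, f x < 0) := by
  by_contra! ⟨⟨x, hx⟩, ⟨y, hy⟩⟩
  obtain ⟨z, hz⟩ := intermediate_value_univ x y hf ⟨hx, hy⟩
  exact h0 z hz

theorem IsCinf.continuous {E : Type} {f : (E → ℝ) → ℝ} (hf : IsCinf f) : Continuous f := by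
  obtain ⟨s, g, hg, hfg⟩ := hf
  rw [funext hfg]
  exact hg.continuous.comp (continuous_pi fun i => continuous_apply i.1)

theorem IsCinf.sqrt {E : Type} {f : (E → ℝ) → ℝ} (hf : IsCinf f) (h0 : ∀ v, f v ≠ 0) :
    IsCinf fun v => √(f v) := by
  obtain ⟨s, g, hg, hfg⟩ := hf
  have hg0 : ∀ w, g w ≠ 0 := by
    intro w
    obtain ⟨v, rfl⟩ := Subtype.surjective_restrict (β := fun _ => ℝ) (· ∈ s) w
    exact hfg v ▸ h0 v
  exact ⟨s, fun w => √(g w), hg.sqrt hg0, fun v => congrArg Real.sqrt (hfg v)⟩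

namespace Cinf

variable {E : Type}

theorem apply_ne_zero_of_isUnit {f : Cinf E} (hf : IsUnit f) (v : E → ℝ) :
    (f : (E → ℝ) → ℝ) v ≠ 0 :=
  (hf.map ((Pi.evalRingHom _ v).comp (Cinf E).subtype)).ne_zero

theorem exists_eq_sq_of_pos {f : Cinf E} (hpos : ∀ v, 0 < (f : (E → ℝ) → ℝ) v) :
    ∃ u : Cinf E, f = u ^ 2 := by
  refine ⟨⟨_, f.2.sqrt fun v => (hpos v).ne'⟩, Subtype.ext (funext fun v => ?_)⟩
  exact (Real.sq_sqrt (hpos v).le).symm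

end Cinf

/-- Every invertible element of `C^∞(ℝ^E)` is either the square of an
invertible element or the negative of such a square:
`(C^∞(ℝ^E))^× = ((C^∞(ℝ^E))^×)² ∪ (−((C^∞(ℝ^E))^×)²)`. -/
theorem statement16 (E : Type) (f : Cinf E) (hf : IsUnit f) :
    ∃ u : Cinf E, IsUnit u ∧ (f = u ^ 2 ∨ f = -u ^ 2) := by
  rcases pos_or_neg_of_continuous_of_ne_zero f.2.continuous (Cinf.apply_ne_zero_of_isUnit hf)
    with hpos | hneg
  · obtain ⟨u, rfl⟩ := Cinf.exists_eq_sq_of_pos hpos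
    exact ⟨u, (isUnit_pow_iff two_ne_zero).1 hf, Or.inl rfl⟩
  · obtain ⟨u, hu⟩ := Cinf.exists_eq_sq_of_pos (f := -f) fun v => neg_pos.2 (hneg v)
    exact ⟨u, (isUnit_pow_iff two_ne_zero).1 (hu ▸ hf.neg), Or.inr (by rw [← hu, neg_neg])⟩
end

section
/- Let E be an arbitrary set and let I be a prime, proper, C^∞-radical ideal of C^∞(ℝ^E), so that A := C^∞(ℝ^E)/I is a C^∞-reduced C^∞-domain. Then for every invertible element a of A there exists an invertible element u of A such that a = u² or a = −u². In other words, A^× = (A^×)² ∪ (−(A^×)²). -/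
/-! A unit `a` of `C^∞(ℝ^E)/I` has an everywhere positive lift `p` of `a ^ 2`. Positive smooth
functions have smooth positive square roots and are invertible, so `p = (q ^ 2) ^ 2` with `q` a
unit, and in the domain `C^∞(ℝ^E)/I` the equation `a ^ 2 = (q ^ 2) ^ 2` forces `a = ± q ^ 2`. -/

lemma sq_add_sq_mul_sub_one_pos {R : Type*} [Ring R] [LinearOrder R] [IsStrictOrderedRing R]
    (x y : R) : 0 < x ^ 2 + (x * y - 1) ^ 2 := by
  rcases eq_or_ne x 0 with rfl | hx
  · norm_num
  · positivity

/-- Every point of `ℝ^s` is the restriction of a point of `ℝ^E`, so the finite-dimensional factor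
of a smooth function takes no values besides those of the function itself. -/
lemma IsCinf.comp {E : Type} {f : (E → ℝ) → ℝ} (hf : IsCinf f) {φ : ℝ → ℝ}
    (hφ : ∀ v, ContDiffAt ℝ (⊤ : ℕ∞) φ (f v)) : IsCinf (φ ∘ f) := by
  classical
  obtain ⟨s, g, hg, hfg⟩ := hf
  refine ⟨s, φ ∘ g, contDiff_iff_contDiffAt.2 fun w => ?_, fun v => by simp [hfg v]⟩
  let v : E → ℝ := fun e => if h : e ∈ s then w ⟨e, h⟩ else 0
  have hv : (fun i : s => v i.1) = w := funext fun i => dif_pos i.2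
  have hφw := hφ v
  rw [hfg v, hv] at hφw
  exact hφw.comp w hg.contDiffAt

namespace Cinf

variable {E : Type}

lemma isUnit_of_forall_ne_zero (f : Cinf E) (hf : ∀ v, (f : (E → ℝ) → ℝ) v ≠ 0) :
    IsUnit f := by
  refine IsUnit.of_mul_eq_one (a := f) ⟨_, f.2.comp fun v => contDiffAt_inv ℝ (hf v)⟩ ?_
  ext v
  exact mul_inv_cancel₀ (hf v)

lemma exists_pos_sq_eq_of_pos (f : Cinf E) (hf : ∀ v, 0 < (f : (E → ℝ) → ℝ) v) :
    ∃ r : Cinf E, (∀ v, 0 < (r : (E → ℝ) → ℝ) v) ∧ r ^ 2 = f := by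
  refine ⟨⟨_, f.2.comp fun v => Real.contDiffAt_sqrt (hf v).ne'⟩,
    fun v => Real.sqrt_pos.2 (hf v), ?_⟩
  ext v
  exact Real.sq_sqrt (hf v).le

/-- The lift `f ^ 2 + (f * g - 1) ^ 2` of `a ^ 2`, with `g` lifting `a⁻¹`, is positive because
its two summands never vanish simultaneously. -/
lemma exists_pos_lift_sq_of_isUnit {I : Ideal (Cinf E)} {a : Cinf E ⧸ I} (ha : IsUnit a) :
    ∃ p : Cinf E, (∀ v, 0 < (p : (E → ℝ) → ℝ) v) ∧ Ideal.Quotient.mk I p = a ^ 2 := by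
  obtain ⟨f, rfl⟩ := Ideal.Quotient.mk_surjective a
  obtain ⟨b, hfb⟩ := ha.exists_right_inv
  obtain ⟨g, rfl⟩ := Ideal.Quotient.mk_surjective b
  refine ⟨f ^ 2 + (f * g - 1) ^ 2, fun v => ?_, ?_⟩
  · simpa using sq_add_sq_mul_sub_one_pos (f.1 v) (g.1 v)
  · simp [map_sub, hfb]

end Cinf

theorem statement17_general (E : Type) (I : Ideal (Cinf E)) (hprime : I.IsPrime)
    (a : Cinf E ⧸ I) (ha : IsUnit a) :
    ∃ u : Cinf E ⧸ I, IsUnit u ∧ (a = u ^ 2 ∨ a = -u ^ 2) := by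
  obtain ⟨p, hp, hpa⟩ := Cinf.exists_pos_lift_sq_of_isUnit ha
  obtain ⟨r, hr, rfl⟩ := Cinf.exists_pos_sq_eq_of_pos p hp
  obtain ⟨q, hq, rfl⟩ := Cinf.exists_pos_sq_eq_of_pos r hr
  refine ⟨Ideal.Quotient.mk I q, (Cinf.isUnit_of_forall_ne_zero q fun v => (hq v).ne').map _, ?_⟩
  rw [← sq_eq_sq_iff_eq_or_eq_neg, ← hpa, map_pow, map_pow]

/-- Let `I` be a prime, proper, `C^∞`-radical ideal of `C^∞(ℝ^E)` and
`A = C^∞(ℝ^E)/I` (a `C^∞`-reduced `C^∞`-domain). Then every unit of `A` is either the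
square of a unit or the negative of such a square: `A^× = (A^×)² ∪ (−(A^×)²)`. -/
theorem statement17 (E : Type) (I : Ideal (Cinf E)) (hprime : I.IsPrime)
    (hrad : IsCinfRadical I) (a : Cinf E ⧸ I) (ha : IsUnit a) :
    ∃ u : Cinf E ⧸ I, IsUnit u ∧ (a = u ^ 2 ∨ a = -u ^ 2) :=
  statement17_general E I hprime a ha
end
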